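/- The relevant cycle C^+_A(x) admits the equivalent characterization C^+_A(x) = { y ∈ X : Φ(x,y) ≤ Φ(x,A) }. -/

import Mathlib

/-!
Write `a = Φ(x,A)` and `S = {y | Φ(x,y) ≤ a}`. Every state on a path of height `≤ a` from `x`
lies in `S`, so `S` is connected, and a boundary state of `S` with energy `≤ a` could be reached
from `x` below `a`; hence `S` is a cycle (unless `S` is everything). It strictly contains `C_A(x)`:
a state of `A` realising `Φ(x,A)` lies in `S \ C_A(x)`. Conversely, a nontrivial cycle `C ∋ x` is
exactly `{y | Φ(x,y) ≤ max_C H}`, and `C^+_A(x)` contains a state outside `C_A(x)`, so its maximal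
energy is at least `a` and `S ⊆ C^+_A(x)`. Minimality gives the other inclusion.
-/

/- Abstract energy landscape: finite state space `X`, energy `H`, connectivity `q`. -/

variable {X : Type*}

/-- A path from `x` to `y`: a nonempty finite sequence of states with consecutive
states connected by `q`. -/
def IsPath (q : X → X → Prop) (ω : List X) (x y : X) : Prop :=
  ω ≠ [] ∧ ω.Chain' q ∧ ω.head? = some x ∧ ω.getLast? = some y

/-- The elevation (height) of a path: the maximal energy along it. -/
noncomputable def elev (H : X → ℝ) (ω : List X) : ℝ :=
  sSup (H '' {z | z ∈ ω})

/-- The communication energy between two states: the minimal elevation over paths. -/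
noncomputable def commE (H : X → ℝ) (q : X → X → Prop) (x y : X) : ℝ :=
  sInf {e | ∃ ω, IsPath q ω x y ∧ elev H ω = e}

/-- The communication energy between two sets of states. -/
noncomputable def commSet (H : X → ℝ) (q : X → X → Prop) (A B : Set X) : ℝ :=
  sInf {e | ∃ x ∈ A, ∃ y ∈ B, commE H q x y = e}

/-- A set of states is connected if any two of its states are joined by a path inside it. -/
def SetConn (q : X → X → Prop) (C : Set X) : Prop :=
  ∀ x ∈ C, ∀ y ∈ C, ∃ ω, IsPath q ω x y ∧ ∀ z ∈ ω, z ∈ C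

/-- The external boundary of a set of states. -/
def extBdry (q : X → X → Prop) (C : Set X) : Set X :=
  {y | y ∉ C ∧ ∃ x ∈ C, q x y}

/-- A non-trivial cycle: a connected set whose maximal internal energy is strictly
below the minimal energy on its external boundary. -/
def IsNontrivialCycle (H : X → ℝ) (q : X → X → Prop) (C : Set X) : Prop :=
  C.Nonempty ∧ SetConn q C ∧ sSup (H '' C) < sInf (H '' extBdry q C)

/-- A cycle: a singleton, or a non-trivial cycle. -/
def IsCycle (H : X → ℝ) (q : X → X → Prop) (C : Set X) : Prop :=
  (∃ x, C = {x}) ∨ IsNontrivialCycle H q C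

/-- The communication energy between a state and a set of states. -/
noncomputable def commA (H : X → ℝ) (q : X → X → Prop) (x : X) (A : Set X) : ℝ :=
  sInf {e | ∃ y ∈ A, commE H q x y = e}

/-- The initial cycle `C_A(x) = {x} ∪ {z : Φ(x,z) < Φ(x,A)}`. -/
def initCycle (H : X → ℝ) (q : X → X → Prop) (A : Set X) (x : X) : Set X :=
  {x} ∪ {z | commE H q x z < commA H q x A}

namespace IsPath

variable {q : X → X → Prop} {ω ω₁ ω₂ : List X} {x y z : X}

theorem singleton (q : X → X → Prop) (x : X) : IsPath q [x] x x :=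
  ⟨List.cons_ne_nil x [], List.isChain_singleton x, rfl, rfl⟩

theorem head_mem (h : IsPath q ω x y) : x ∈ ω := List.mem_of_mem_head? h.2.2.1

theorem getLast_mem (h : IsPath q ω x y) : y ∈ ω := List.mem_of_mem_getLast? h.2.2.2

theorem reverse (hsymm : ∀ a b, q a b → q b a) (h : IsPath q ω x y) :
    IsPath q ω.reverse y x :=
  ⟨List.reverse_ne_nil_iff.2 h.1, List.isChain_reverse.2 (h.2.1.imp fun a b => hsymm a b),
    by rw [List.head?_reverse, h.2.2.2], by rw [List.getLast?_reverse, h.2.2.1]⟩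

theorem append (h₁ : IsPath q ω₁ x y) (h₂ : IsPath q ω₂ y z) :
    IsPath q (ω₁ ++ ω₂.tail) x z := by
  obtain ⟨hne₁, hc₁, hh₁, hl₁⟩ := h₁
  obtain ⟨hne₂, hc₂, hh₂, hl₂⟩ := h₂
  obtain ⟨t, rfl⟩ : ∃ t, ω₂ = y :: t := List.head?_eq_some_iff.1 hh₂
  refine ⟨by simp [hne₁], ?_, by simp [List.head?_append, hh₁], ?_⟩
  · refine (hc₁ : ω₁.IsChain q).append hc₂.tail fun a ha b hb => ?_
    rw [hl₁, Option.mem_some_iff] at ha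
    exact ha ▸ (List.isChain_cons.1 hc₂).1 b hb
  · cases t with
    | nil => simpa [hl₁] using hl₂
    | cons b s => simpa [List.getLast?_append] using hl₂

theorem concat (h : IsPath q ω x y) (hyz : q y z) : IsPath q (ω ++ [z]) x z :=
  h.append ⟨by simp, List.isChain_pair.2 hyz, rfl, rfl⟩

theorem exists_prefix (h : IsPath q ω x y) (hz : z ∈ ω) :
    ∃ ω', IsPath q ω' x z ∧ ∀ u ∈ ω', u ∈ ω := by
  obtain ⟨s, t, rfl⟩ := List.append_of_mem hz
  refine ⟨s ++ [z], ⟨by simp, h.2.1.prefix ⟨t, by simp⟩, ?_, List.getLast?_concat⟩, ?_⟩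
  · cases s <;> simpa using h.2.2.1
  · intro u hu
    simp only [List.mem_append, List.mem_cons] at hu ⊢
    tauto

theorem exists_mem_extBdry {C : Set X} (h : IsPath q ω x y) (hx : x ∈ C) (hy : y ∉ C) :
    ∃ w ∈ ω, w ∈ extBdry q C := by
  by_contra! hω
  have hchain : ω.IsChain fun a b => q a b ∧ b ∉ extBdry q C :=
    (h.2.1 : ω.IsChain q).imp_of_mem_imp fun a b _ hb hab => ⟨hab, hω b hb⟩
  refine hy (hchain.induction (· ∈ C) ω (fun a b hab ha => ?_) (fun hne => ?_) y h.getLast_mem)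
  · by_contra hb
    exact hab.2 ⟨hb, a, ha, hab.1⟩
  · rwa [(List.head_eq_iff_head?_eq_some hne).2 h.2.2.1]

end IsPath

section Elevation

variable (H : X → ℝ) {ω : List X}

theorem le_elev {z : X} (hz : z ∈ ω) : H z ≤ elev H ω :=
  le_csSup (ω.finite_toSet.image H).bddAbove ⟨z, hz, rfl⟩

theorem elev_le_iff (hω : ω ≠ []) {c : ℝ} : elev H ω ≤ c ↔ ∀ z ∈ ω, H z ≤ c := by
  obtain ⟨a, ha⟩ := List.exists_mem_of_ne_nil ω hω
  rw [elev, csSup_le_iff (ω.finite_toSet.image H).bddAbove ⟨H a, a, ha, rfl⟩,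
    Set.forall_mem_image]
  rfl

end Elevation

section CommunicationEnergy

variable [Finite X] (H : X → ℝ) (q : X → X → Prop) {ω : List X} {x y z : X} {c : ℝ}

theorem finite_setOf_elev_isPath (x y : X) :
    {e | ∃ ω, IsPath q ω x y ∧ elev H ω = e}.Finite :=
  (Set.finite_univ.image fun s : Set X => sSup (H '' s)).subset <| by
    rintro e ⟨ω, -, rfl⟩
    exact ⟨{z | z ∈ ω}, trivial, rfl⟩

theorem commE_le_elev (h : IsPath q ω x y) : commE H q x y ≤ elev H ω :=
  csInf_le (finite_setOf_elev_isPath H q x y).bddBelow ⟨ω, h, rfl⟩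

theorem exists_isPath_elev_eq_commE (hirr : ∀ x y : X, ∃ ω, IsPath q ω x y) (x y : X) :
    ∃ ω, IsPath q ω x y ∧ elev H ω = commE H q x y :=
  have ⟨ω, hω⟩ := hirr x y
  Set.Nonempty.csInf_mem (s := {e | ∃ ω, IsPath q ω x y ∧ elev H ω = e}) ⟨_, ω, hω, rfl⟩
    (finite_setOf_elev_isPath H q x y)

theorem commE_le_iff (hirr : ∀ x y : X, ∃ ω, IsPath q ω x y) :
    commE H q x y ≤ c ↔ ∃ ω, IsPath q ω x y ∧ ∀ z ∈ ω, H z ≤ c := by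
  constructor
  · intro hc
    obtain ⟨ω, hω, heq⟩ := exists_isPath_elev_eq_commE H q hirr x y
    exact ⟨ω, hω, (elev_le_iff H hω.1).1 (heq ▸ hc)⟩
  · rintro ⟨ω, hω, hle⟩
    exact (commE_le_elev H q hω).trans ((elev_le_iff H hω.1).2 hle)

theorem le_commE_left (hirr : ∀ x y : X, ∃ ω, IsPath q ω x y) (x y : X) :
    H x ≤ commE H q x y :=
  have ⟨_, hω, hle⟩ := (commE_le_iff H q hirr).1 le_rfl
  hle x hω.head_mem

theorem le_commE_right (hirr : ∀ x y : X, ∃ ω, IsPath q ω x y) (x y : X) :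
    H y ≤ commE H q x y :=
  have ⟨_, hω, hle⟩ := (commE_le_iff H q hirr).1 le_rfl
  hle y hω.getLast_mem

theorem commE_self_le (x : X) : commE H q x x ≤ H x := by
  simpa [elev] using commE_le_elev H q (IsPath.singleton q x)

theorem IsPath.commE_le_of_mem (h : IsPath q ω x y) (hle : ∀ u ∈ ω, H u ≤ c) (hz : z ∈ ω) :
    commE H q x z ≤ c :=
  have ⟨_, hω', hsub⟩ := h.exists_prefix hz
  (commE_le_elev H q hω').trans ((elev_le_iff H hω'.1).2 fun u hu => hle u (hsub u hu))

theorem exists_commE_eq_commA {A : Set X} (hA : A.Nonempty) (x : X) :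
    ∃ y ∈ A, commE H q x y = commA H q x A :=
  (hA.image _).csInf_mem (A.toFinite.image _)

end CommunicationEnergy

section Sublevel

variable [Finite X] (H : X → ℝ) (q : X → X → Prop) {x : X} {c : ℝ}

theorem setConn_setOf_commE_le (hsymm : ∀ a b, q a b → q b a)
    (hirr : ∀ x y : X, ∃ ω, IsPath q ω x y) :
    SetConn q {y | commE H q x y ≤ c} := by
  have path_from_x : ∀ u, commE H q x u ≤ c →
      ∃ ω, IsPath q ω x u ∧ ∀ z ∈ ω, commE H q x z ≤ c := fun u hu =>
    have ⟨ω, hω, hle⟩ := (commE_le_iff H q hirr).1 hu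
    ⟨ω, hω, fun _ hz => hω.commE_le_of_mem H q hle hz⟩
  intro u hu v hv
  obtain ⟨ω₁, h₁, hin₁⟩ := path_from_x u hu
  obtain ⟨ω₂, h₂, hin₂⟩ := path_from_x v hv
  refine ⟨_, (h₁.reverse hsymm).append h₂, fun z hz => ?_⟩
  rcases List.mem_append.1 hz with hz | hz
  · exact hin₁ z (List.mem_reverse.1 hz)
  · exact hin₂ z (List.mem_of_mem_tail hz)

theorem lt_of_mem_extBdry_setOf_commE_le (hirr : ∀ x y : X, ∃ ω, IsPath q ω x y) {w : X}
    (hw : w ∈ extBdry q {y | commE H q x y ≤ c}) : c < H w := by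
  obtain ⟨hwS, z, hz, hzw⟩ := hw
  by_contra! hwc
  obtain ⟨ω, hω, hle⟩ := (commE_le_iff H q hirr).1 hz
  refine hwS ((commE_le_iff H q hirr).2 ⟨_, hω.concat hzw, fun u hu => ?_⟩)
  rcases List.mem_append.1 hu with hu | hu
  · exact hle u hu
  · exact List.mem_singleton.1 hu ▸ hwc

theorem isNontrivialCycle_setOf_commE_le (hsymm : ∀ a b, q a b → q b a)
    (hirr : ∀ x y : X, ∃ ω, IsPath q ω x y) (hx : commE H q x x ≤ c)
    (hc : ∃ y, c < commE H q x y) :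
    IsNontrivialCycle H q {y | commE H q x y ≤ c} := by
  set S := {y | commE H q x y ≤ c}
  obtain ⟨y, hy⟩ := hc
  obtain ⟨ω, hω⟩ := hirr x y
  obtain ⟨w, -, hw⟩ := hω.exists_mem_extBdry (C := S) hx hy.not_ge
  refine ⟨⟨x, hx⟩, setConn_setOf_commE_le H q hsymm hirr, ?_⟩
  calc sSup (H '' S) ≤ c :=
        csSup_le ⟨H x, x, hx, rfl⟩ <| Set.forall_mem_image.2 fun u hu =>
          (le_commE_right H q hirr x u).trans hu
    _ < sInf (H '' extBdry q S) :=
        ((extBdry q S).toFinite.image H).lt_csInf_iff ⟨H w, w, hw, rfl⟩ |>.2 <|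
          Set.forall_mem_image.2 fun _ hu => lt_of_mem_extBdry_setOf_commE_le H q hirr hu

end Sublevel

theorem IsCycle.isNontrivialCycle_of_ssubset {H : X → ℝ} {q : X → X → Prop} {B C : Set X}
    (hC : IsCycle H q C) (hB : B.Nonempty) (hBC : B ⊂ C) : IsNontrivialCycle H q C := by
  rcases hC with ⟨c, rfl⟩ | hC
  · exact absurd ((hB.subset_singleton_iff).1 hBC.1) hBC.ne
  · exact hC

section Cycle

variable [Finite X] {H : X → ℝ} {q : X → X → Prop} {C : Set X} {x : X}

theorem SetConn.commE_le_sSup (hC : SetConn q C) {y : X} (hx : x ∈ C) (hy : y ∈ C) :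
    commE H q x y ≤ sSup (H '' C) :=
  have ⟨_, hω, hin⟩ := hC x hx y hy
  (commE_le_elev H q hω).trans <| (elev_le_iff H hω.1).2 fun z hz =>
    le_csSup (C.toFinite.image H).bddAbove ⟨z, hin z hz, rfl⟩

theorem IsNontrivialCycle.sSup_lt_commE (hirr : ∀ x y : X, ∃ ω, IsPath q ω x y)
    (hC : IsNontrivialCycle H q C) {y : X} (hx : x ∈ C) (hy : y ∉ C) :
    sSup (H '' C) < commE H q x y := by
  obtain ⟨ω, hω, heq⟩ := exists_isPath_elev_eq_commE H q hirr x y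
  obtain ⟨w, hwω, hw⟩ := hω.exists_mem_extBdry hx hy
  calc sSup (H '' C) < sInf (H '' extBdry q C) := hC.2.2
    _ ≤ H w := csInf_le ((extBdry q C).toFinite.image H).bddBelow ⟨w, hw, rfl⟩
    _ ≤ elev H ω := le_elev H hwω
    _ = commE H q x y := heq

theorem IsNontrivialCycle.eq_setOf_commE_le (hirr : ∀ x y : X, ∃ ω, IsPath q ω x y)
    (hC : IsNontrivialCycle H q C) (hx : x ∈ C) :
    C = {y | commE H q x y ≤ sSup (H '' C)} :=
  Set.Subset.antisymm (fun _ hy => hC.2.1.commE_le_sSup hx hy)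
    fun _ hy => by_contra fun hyC => (hC.sSup_lt_commE hirr hx hyC).not_ge hy

end Cycle

theorem initCycle_ssubset_setOf_commE_le [Finite X] (H : X → ℝ) (q : X → X → Prop)
    (hirr : ∀ x y : X, ∃ ω, IsPath q ω x y) {A : Set X} (hA : A.Nonempty) {x : X}
    (hx : x ∉ A) : initCycle H q A x ⊂ {y | commE H q x y ≤ commA H q x A} := by
  obtain ⟨y, hyA, hy⟩ := exists_commE_eq_commA H q hA x
  refine (Set.ssubset_iff_of_subset ?_).2 ⟨y, hy.le, ?_⟩
  · rintro z (rfl | hz)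
    · exact (commE_self_le H q z).trans (hy ▸ le_commE_left H q hirr z y)
    · exact le_of_lt (show commE H q x z < commA H q x A from hz)
  · rintro (rfl | hlt)
    · exact hx hyA
    · exact hlt.ne hy

/-- the relevant cycle `C^+_A(x)` (the minimal cycle strictly containing
the initial cycle `C_A(x)`) equals `{ y : Φ(x,y) ≤ Φ(x,A) }`. -/
theorem relevant_cycle_characterization [Fintype X] (H : X → ℝ) (q : X → X → Prop)
    (hsymm : ∀ x y, q x y → q y x)
    (hirr : ∀ x y : X, ∃ ω, IsPath q ω x y)
    (A : Set X) (hA : A.Nonempty) (x : X) (hx : x ∉ A)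
    (Cp : Set X) (hcyc : IsCycle H q Cp)
    (hsub : initCycle H q A x ⊂ Cp)
    (hmin : ∀ C', IsCycle H q C' → initCycle H q A x ⊂ C' → Cp ⊆ C') :
    Cp = {y | commE H q x y ≤ commA H q x A} := by
  have hinit := initCycle_ssubset_setOf_commE_le H q hirr hA hx
  have hxCp : x ∈ Cp := hsub.1 (Or.inl rfl)
  have hCp := hcyc.isNontrivialCycle_of_ssubset ⟨x, Or.inl rfl⟩ hsub
  obtain ⟨w, hwCp, hwI⟩ := Set.exists_of_ssubset hsub
  have haw : commA H q x A ≤ commE H q x w := not_lt.1 fun h => hwI (Or.inr h)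
  refine Set.Subset.antisymm ?_ ?_
  · by_cases hS : ∃ y, commA H q x A < commE H q x y
    · exact hmin _ (Or.inr (isNontrivialCycle_setOf_commE_le H q hsymm hirr
        (hinit.1 (Or.inl rfl)) hS)) hinit
    · exact fun y _ => not_lt.1 (not_exists.1 hS y)
  · rw [hCp.eq_setOf_commE_le hirr hxCp]
    exact fun y hy => hy.trans (haw.trans (hCp.2.1.commE_le_sSup hxCp hwCp))
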